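/- Let a < b, and define for j, k ∈ ℕ and x₁ ∈ [a,b] the integral M_{k,j}(x₁,b) = (2/(b−a))∫_{x₁}^b e^{ijπ(x−a)/(b−a)} cos(kπ(x−a)/(b−a)) dx. Then M_{k,j}(x₁,b) = M^c_{j+k} + M^s_{j−k} where M^c_m depends only on j+k and M^s_m only on j−k; i.e., the matrix (M_{k,j}) is the sum of a Hankel matrix and a Toeplitz matrix. -/

import Mathlib

open Real Complex

/-!
Writing `u = π(x−a)/(b−a)`, the product-to-sum identity
`e^{iju} cos(ku) = (e^{i(j+k)u} + e^{i(j−k)u}) / 2` splits the integrand into a term depending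
only on `j + k` and a term depending only on `j − k`; both are the same exponential moment
`(1/(b−a)) ∫_{x₁}^b e^{imu} dx`, evaluated at `m = j + k` and `m = j − k`.
-/

lemma Complex.exp_I_mul_mul_cos (s t : ℂ) :
    exp (I * s) * cos t = (exp (I * (s + t)) + exp (I * (s - t))) / 2 := by
  rw [cos, mul_div_assoc', mul_add, ← exp_add, ← exp_add]
  congr 3 <;> ring_nf

lemma intervalIntegral.integral_exp_I_mul_mul_cos {f : ℝ → ℂ} (hf : Continuous f) (s t : ℂ)
    (x₁ b : ℝ) :
    ∫ x in x₁..b, exp (I * s * f x) * cos (t * f x) =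
      ((∫ x in x₁..b, exp (I * (s + t) * f x)) + ∫ x in x₁..b, exp (I * (s - t) * f x)) / 2 := by
  simp only [mul_assoc, Complex.exp_I_mul_mul_cos, ← add_mul, ← sub_mul]
  rw [intervalIntegral.integral_div, intervalIntegral.integral_add] <;>
    exact (by fun_prop : Continuous _).intervalIntegrable _ _

/-- The common symbol `M^c_m = M^s_m` of the Hankel and the Toeplitz part. -/
noncomputable def cosMatrixSymbol (a b x₁ : ℝ) (m : ℂ) : ℂ :=
  (1 / (b - a)) * ∫ x in x₁..b, exp (I * m * π * (x - a) / (b - a))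

theorem cos_matrix_hankel_plus_toeplitz_general (a b x₁ : ℝ) :
    ∃ (Mc : ℕ → ℂ) (Ms : ℤ → ℂ), ∀ j k : ℕ,
      (2 / (b - a) : ℂ) *
          ∫ x in x₁..b,
            Complex.exp (Complex.I * j * π * (x - a) / (b - a)) *
              Complex.cos (k * π * (x - a) / (b - a)) =
        Mc (j + k) + Ms ((j : ℤ) - (k : ℤ)) := by
  refine ⟨fun n => cosMatrixSymbol a b x₁ n, fun m => cosMatrixSymbol a b x₁ m, fun j k => ?_⟩
  have phase : ∀ (c : ℂ) (x : ℝ), c * π * (x - a) / (b - a) = c * (π * (x - a) / (b - a)) :=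
    fun c x => by ring
  simp only [cosMatrixSymbol, phase]
  rw [intervalIntegral.integral_exp_I_mul_mul_cos (by fun_prop)]
  push_cast
  ring

/-- Hankel-plus-Toeplitz structure of the COS matrix: the entries
`M_{k,j}(x₁,b) = (2/(b−a))∫_{x₁}^b e^{ijπ(x−a)/(b−a)} cos(kπ(x−a)/(b−a)) dx`
decompose as `M_{k,j} = M^c_{j+k} + M^s_{j−k}`, i.e. the matrix is the sum of a
Hankel matrix and a Toeplitz matrix. -/
theorem cos_matrix_hankel_plus_toeplitz (a b x₁ : ℝ) (hab : a < b)
    (hx₁ : x₁ ∈ Set.Icc a b) :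
    ∃ (Mc : ℕ → ℂ) (Ms : ℤ → ℂ), ∀ j k : ℕ,
      (2 / (b - a) : ℂ) *
          ∫ x in x₁..b,
            Complex.exp (Complex.I * j * π * (x - a) / (b - a)) *
              Complex.cos (k * π * (x - a) / (b - a)) =
        Mc (j + k) + Ms ((j : ℤ) - (k : ℤ)) :=
  cos_matrix_hankel_plus_toeplitz_general a b x₁
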